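/- arXiv:1303.2209 — 5 statements merged into one kernel-verified Lean document; each statement's English description precedes it below -/
import Mathlib

section
/- For all (x,y) ∈ [−π,π]² and all A ∈ [0,1), the complex number 1 − A·p̂(x,y) satisfies |1 − A·p̂(x,y)| ≥ (1/24) · q · ((1−A) + x² + y²), where p̂(x,y) := Σ_{|t|+|s|=1} e^{−i(tx+sy)} p(t,s) is the characteristic function of the one-step distribution. -/
/-!
The real part of `1 - A p̂(x,y)` is
`(1 - A) + A ((p(1,0) + p(-1,0)) (1 - cos x) + (p(0,1) + p(0,-1)) (1 - cos y))`,
and `1 - cos x ≥ 2x²/π² ≥ x²/5` on `[-π, π]`, so it is at least `(1 - A) + A q (x² + y²)/5`.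
Since `q ≤ 1/2` and `x² + y² ≤ 20`, this dominates `(q/24) ((1 - A) + x² + y²)`.
-/

open MeasureTheory Filter Set Real

lemma pi_sq_le_ten : π ^ 2 ≤ 10 := by nlinarith [pi_lt_d2, pi_pos]

lemma sq_le_ten_of_abs_le_pi {x : ℝ} (hx : |x| ≤ π) : x ^ 2 ≤ 10 :=
  (sq_le_sq' (abs_le.mp hx).1 (abs_le.mp hx).2).trans pi_sq_le_ten

lemma sq_div_five_le_one_sub_cos {x : ℝ} (hx : |x| ≤ π) : x ^ 2 / 5 ≤ 1 - cos x := by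
  have hcos := cos_le_one_sub_mul_cos_sq hx
  have h : 1 / 5 ≤ 2 / π ^ 2 := by
    rw [div_le_div_iff₀ (by norm_num) (by positivity)]
    linarith [pi_sq_le_ten]
  nlinarith [mul_le_mul_of_nonneg_right h (sq_nonneg x)]

lemma mul_sq_div_five_le_mul_one_sub_cos {a q x : ℝ} (ha : 0 ≤ a) (hqa : q ≤ a)
    (hx : |x| ≤ π) : q * x ^ 2 / 5 ≤ a * (1 - cos x) :=
  calc q * x ^ 2 / 5 ≤ a * (x ^ 2 / 5) := by nlinarith [sq_nonneg x]
    _ ≤ a * (1 - cos x) := mul_le_mul_of_nonneg_left (sq_div_five_le_one_sub_cos hx) ha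

lemma re_ofReal_mul_exp_neg_add_ofReal_mul_exp (a b t : ℝ) :
    ((a : ℂ) * Complex.exp (-Complex.I * t) + (b : ℂ) * Complex.exp (Complex.I * t)).re =
      (a + b) * cos t := by
  have hneg : -Complex.I * t = ((-t : ℝ) : ℂ) * Complex.I := by push_cast; ring
  rw [hneg, mul_comm Complex.I, Complex.exp_mul_I, Complex.exp_mul_I]
  simp [← Complex.ofReal_cos, ← Complex.ofReal_sin]
  ring

/- Both sides are affine in `A`: at `A = 0` it reads `q (1 + s)/24 ≤ 1`, at `A = 1` it reads
`q s/24 ≤ q s/5`. -/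
lemma div_24_mul_one_sub_add_le {q A s : ℝ} (hq : 0 ≤ q) (hq2 : q ≤ 1 / 2) (hA0 : 0 ≤ A)
    (hA1 : A ≤ 1) (hs0 : 0 ≤ s) (hs : s ≤ 20) :
    q / 24 * ((1 - A) + s) ≤ (1 - A) + A * (q * s / 5) := by
  nlinarith [mul_nonneg (sub_nonneg.mpr hA1) (mul_nonneg hq hs0),
    mul_nonneg hA0 (mul_nonneg hq hs0), mul_nonneg (sub_nonneg.mpr hA1) (sub_nonneg.mpr hq2),
    mul_nonneg (sub_nonneg.mpr hA1) (sub_nonneg.mpr hs)]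

/-- Inequality (7.4) (`hatp`): for a nearest-neighbour random walk on `ℤ²` with one-step
probabilities `p(±1,0), p(0,±1)` and `q := min(p(0,1)+p(0,-1), p(1,0)+p(-1,0))`, for all
`(x,y) ∈ [-π,π]²` and `A ∈ [0,1)` one has
`|1 - A p̂(x,y)| ≥ (1/24) q ((1-A) + x² + y²)`. -/
theorem char_fun_lower_bound (p10 pm10 p01 p0m1 : ℝ)
    (h10 : 0 ≤ p10) (hm10 : 0 ≤ pm10) (h01 : 0 ≤ p01) (h0m1 : 0 ≤ p0m1)
    (hsum : p10 + pm10 + p01 + p0m1 = 1)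
    (x y : ℝ) (hx : x ∈ Set.Icc (-Real.pi) Real.pi) (hy : y ∈ Set.Icc (-Real.pi) Real.pi)
    (A : ℝ) (hA : A ∈ Set.Ico (0 : ℝ) 1) :
    (1 / 24) * min (p01 + p0m1) (p10 + pm10) * ((1 - A) + x ^ 2 + y ^ 2) ≤
      ‖(1 - (A : ℂ) *
        ((p10 : ℂ) * Complex.exp (-Complex.I * (x : ℂ)) +
         (pm10 : ℂ) * Complex.exp (Complex.I * (x : ℂ)) +
         (p01 : ℂ) * Complex.exp (-Complex.I * (y : ℂ)) +
         (p0m1 : ℂ) * Complex.exp (Complex.I * (y : ℂ))))‖ := by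
  obtain ⟨hA0, hA1⟩ := hA
  replace hx : |x| ≤ π := abs_le.mpr hx
  replace hy : |y| ≤ π := abs_le.mpr hy
  set q := min (p01 + p0m1) (p10 + pm10)
  have hqy : q ≤ p01 + p0m1 := min_le_left _ _
  have hqx : q ≤ p10 + pm10 := min_le_right _ _
  have hq : 0 ≤ q := le_min (by positivity) (by positivity)
  have hs := add_le_add (sq_le_ten_of_abs_le_pi hx) (sq_le_ten_of_abs_le_pi hy)
  calc (1 / 24) * q * ((1 - A) + x ^ 2 + y ^ 2)
      ≤ (1 - A) + A * (q * (x ^ 2 + y ^ 2) / 5) := by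
        convert div_24_mul_one_sub_add_le (s := x ^ 2 + y ^ 2) hq (by linarith) hA0 hA1.le
          (by positivity) (by linarith) using 1
        ring
    _ ≤ (1 - A) + A * ((p10 + pm10) * (1 - cos x) + (p01 + p0m1) * (1 - cos y)) := by
        gcongr
        linarith [mul_sq_div_five_le_mul_one_sub_cos (by positivity) hqx hx,
          mul_sq_div_five_le_mul_one_sub_cos (by positivity) hqy hy]
    _ = (1 - (A : ℂ) * _).re := by
        rw [Complex.sub_re, Complex.one_re, Complex.re_ofReal_mul, add_assoc, Complex.add_re,
          re_ofReal_mul_exp_neg_add_ofReal_mul_exp, re_ofReal_mul_exp_neg_add_ofReal_mul_exp]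
        linear_combination A * hsum
    _ ≤ _ := Complex.re_le_norm _
end

section
/- For every p ∈ (0,1] there exists a constant C = C(p) > 0 such that for every choice of nearest-neighbour one-step probabilities and every A ∈ [0,1), Σ_{(t,s)∈ℤ²} g(t,s)^p ≤ C / (1−A)^{3−2p}. -/
open MeasureTheory Filter Set

/-- `k`-step transition probabilities (k-fold convolution of the one-step distribution) of the
nearest-neighbour random walk on `ℤ²` with one-step probabilities
`p(1,0) = p10`, `p(-1,0) = pm10`, `p(0,1) = p01`, `p(0,-1) = p0m1`. -/
noncomputable def pkNN (p10 pm10 p01 p0m1 : ℝ) : ℕ → ℤ × ℤ → ℝ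
  | 0 => fun ts => if ts = (0, 0) then 1 else 0
  | k + 1 => fun ts =>
      pkNN p10 pm10 p01 p0m1 k (ts.1 - 1, ts.2) * p10 +
      pkNN p10 pm10 p01 p0m1 k (ts.1 + 1, ts.2) * pm10 +
      pkNN p10 pm10 p01 p0m1 k (ts.1, ts.2 - 1) * p01 +
      pkNN p10 pm10 p01 p0m1 k (ts.1, ts.2 + 1) * p0m1

/-- Lattice Green function `g(t,s) = Σ_k A^k p_k(t,s)`. -/
noncomputable def gNN (p10 pm10 p01 p0m1 A : ℝ) (ts : ℤ × ℤ) : ℝ :=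
  ∑' k : ℕ, A ^ k * pkNN p10 pm10 p01 p0m1 k ts

section auxiliary

variable {p10 pm10 p01 p0m1 A : ℝ}

lemma pkNN_nonneg (h10 : 0 ≤ p10) (hm10 : 0 ≤ pm10) (h01 : 0 ≤ p01) (h0m1 : 0 ≤ p0m1) :
    ∀ k ts, 0 ≤ pkNN p10 pm10 p01 p0m1 k ts := by
  intro k
  induction k with
  | zero => intro ts; simp only [pkNN]; split <;> norm_num
  | succ k ih =>
      intro ts
      simp only [pkNN]
      have h1 := ih (ts.1 - 1, ts.2)
      have h2 := ih (ts.1 + 1, ts.2)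
      have h3 := ih (ts.1, ts.2 - 1)
      have h4 := ih (ts.1, ts.2 + 1)
      positivity

private lemma sum_comp_le {f : ℤ × ℤ → ℝ} (hk : ∀ F : Finset (ℤ × ℤ), ∑ ts ∈ F, f ts ≤ 1)
    {σ : ℤ × ℤ → ℤ × ℤ} (hσ : Function.Injective σ) (F : Finset (ℤ × ℤ)) :
    ∑ ts ∈ F, f (σ ts) ≤ 1 := by
  rw [← Finset.sum_image (fun a _ b _ h => hσ h)]
  exact hk _

lemma pkNN_sum_le (h10 : 0 ≤ p10) (hm10 : 0 ≤ pm10) (h01 : 0 ≤ p01) (h0m1 : 0 ≤ p0m1)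
    (hsum : p10 + pm10 + p01 + p0m1 = 1) :
    ∀ k (F : Finset (ℤ × ℤ)), ∑ ts ∈ F, pkNN p10 pm10 p01 p0m1 k ts ≤ 1 := by
  intro k
  induction k with
  | zero =>
      intro F
      simp only [pkNN]
      rw [Finset.sum_ite_eq' F ((0:ℤ), (0:ℤ)) (fun _ => (1:ℝ))]
      split <;> norm_num
  | succ k ih =>
      intro F
      simp only [pkNN]
      have e1 : ∑ ts ∈ F, pkNN p10 pm10 p01 p0m1 k (ts.1 - 1, ts.2) ≤ 1 :=
        sum_comp_le ih (fun a b h => by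
          simp only [Prod.mk.injEq, Prod.ext_iff] at h ⊢; omega) F
      have e2 : ∑ ts ∈ F, pkNN p10 pm10 p01 p0m1 k (ts.1 + 1, ts.2) ≤ 1 :=
        sum_comp_le ih (fun a b h => by
          simp only [Prod.mk.injEq, Prod.ext_iff] at h ⊢; omega) F
      have e3 : ∑ ts ∈ F, pkNN p10 pm10 p01 p0m1 k (ts.1, ts.2 - 1) ≤ 1 :=
        sum_comp_le ih (fun a b h => by
          simp only [Prod.mk.injEq, Prod.ext_iff] at h ⊢; omega) F
      have e4 : ∑ ts ∈ F, pkNN p10 pm10 p01 p0m1 k (ts.1, ts.2 + 1) ≤ 1 :=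
        sum_comp_le ih (fun a b h => by
          simp only [Prod.mk.injEq, Prod.ext_iff] at h ⊢; omega) F
      have hnn := pkNN_nonneg h10 hm10 h01 h0m1 k
      calc ∑ ts ∈ F, (pkNN p10 pm10 p01 p0m1 k (ts.1 - 1, ts.2) * p10 +
            pkNN p10 pm10 p01 p0m1 k (ts.1 + 1, ts.2) * pm10 +
            pkNN p10 pm10 p01 p0m1 k (ts.1, ts.2 - 1) * p01 +
            pkNN p10 pm10 p01 p0m1 k (ts.1, ts.2 + 1) * p0m1)
          = (∑ ts ∈ F, pkNN p10 pm10 p01 p0m1 k (ts.1 - 1, ts.2)) * p10 +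
            (∑ ts ∈ F, pkNN p10 pm10 p01 p0m1 k (ts.1 + 1, ts.2)) * pm10 +
            (∑ ts ∈ F, pkNN p10 pm10 p01 p0m1 k (ts.1, ts.2 - 1)) * p01 +
            (∑ ts ∈ F, pkNN p10 pm10 p01 p0m1 k (ts.1, ts.2 + 1)) * p0m1 := by
            simp [Finset.sum_add_distrib, Finset.sum_mul]
        _ ≤ 1 * p10 + 1 * pm10 + 1 * p01 + 1 * p0m1 := by gcongr
        _ = 1 := by linarith

lemma pkNN_le_one (h10 : 0 ≤ p10) (hm10 : 0 ≤ pm10) (h01 : 0 ≤ p01) (h0m1 : 0 ≤ p0m1)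
    (hsum : p10 + pm10 + p01 + p0m1 = 1) (k : ℕ) (ts : ℤ × ℤ) :
    pkNN p10 pm10 p01 p0m1 k ts ≤ 1 := by
  have := pkNN_sum_le h10 hm10 h01 h0m1 hsum k {ts}
  simpa using this

lemma pkNN_eq_zero : ∀ (k : ℕ) (ts : ℤ × ℤ), k < ts.1.natAbs + ts.2.natAbs →
    pkNN p10 pm10 p01 p0m1 k ts = 0 := by
  intro k
  induction k with
  | zero =>
      intro ts h
      simp only [pkNN]
      rw [if_neg]
      intro he
      rw [he] at h
      simp at h
  | succ k ih =>
      intro ts h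
      have n1 : (ts.1 - 1).natAbs + 1 ≥ ts.1.natAbs := by
        have := Int.natAbs_add_le (ts.1 - 1) 1
        simp at this; omega
      have n2 : (ts.1 + 1).natAbs + 1 ≥ ts.1.natAbs := by
        have := Int.natAbs_add_le (ts.1 + 1) (-1)
        simp at this; omega
      have n3 : (ts.2 - 1).natAbs + 1 ≥ ts.2.natAbs := by
        have := Int.natAbs_add_le (ts.2 - 1) 1
        simp at this; omega
      have n4 : (ts.2 + 1).natAbs + 1 ≥ ts.2.natAbs := by
        have := Int.natAbs_add_le (ts.2 + 1) (-1)
        simp at this; omega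
      simp only [pkNN]
      rw [ih (ts.1 - 1, ts.2) (by simp; omega), ih (ts.1 + 1, ts.2) (by simp; omega),
        ih (ts.1, ts.2 - 1) (by simp; omega), ih (ts.1, ts.2 + 1) (by simp; omega)]
      ring

lemma gNN_term_summable (h10 : 0 ≤ p10) (hm10 : 0 ≤ pm10) (h01 : 0 ≤ p01) (h0m1 : 0 ≤ p0m1)
    (hsum : p10 + pm10 + p01 + p0m1 = 1) (hA0 : 0 ≤ A) (hA1 : A < 1) (ts : ℤ × ℤ) :
    Summable (fun k : ℕ => A ^ k * pkNN p10 pm10 p01 p0m1 k ts) :=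
  Summable.of_nonneg_of_le
    (fun k => mul_nonneg (pow_nonneg hA0 k) (pkNN_nonneg h10 hm10 h01 h0m1 k ts))
    (fun k => by
      calc A ^ k * pkNN p10 pm10 p01 p0m1 k ts ≤ A ^ k * 1 :=
            mul_le_mul_of_nonneg_left (pkNN_le_one h10 hm10 h01 h0m1 hsum k ts)
              (pow_nonneg hA0 k)
        _ = A ^ k := mul_one _)
    (summable_geometric_of_lt_one hA0 hA1)

lemma gNN_nonneg (h10 : 0 ≤ p10) (hm10 : 0 ≤ pm10) (h01 : 0 ≤ p01) (h0m1 : 0 ≤ p0m1)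
    (hA0 : 0 ≤ A) (ts : ℤ × ℤ) : 0 ≤ gNN p10 pm10 p01 p0m1 A ts :=
  tsum_nonneg fun k => mul_nonneg (pow_nonneg hA0 k) (pkNN_nonneg h10 hm10 h01 h0m1 k ts)

private lemma tail_geom_bound {A : ℝ} (hA0 : 0 ≤ A) (hA1 : A < 1) (n : ℕ) (f : ℕ → ℝ)
    (hs : Summable f) (hnn : ∀ k, 0 ≤ f k) (hz : ∀ k < n, f k = 0)
    (hle : ∀ k, f k ≤ A ^ k) :
    ∑' k, f k ≤ A ^ n / (1 - A) := by
  rw [← Summable.sum_add_tsum_nat_add n hs]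
  have h1 : ∑ i ∈ Finset.range n, f i = 0 :=
    Finset.sum_eq_zero (fun i hi => hz i (Finset.mem_range.mp hi))
  rw [h1, zero_add]
  have hsg : Summable (fun i : ℕ => A ^ (i + n)) := by
    simpa [pow_add] using (summable_geometric_of_lt_one hA0 hA1).mul_right (A ^ n)
  calc ∑' i, f (i + n) ≤ ∑' i : ℕ, A ^ (i + n) := by
        apply Summable.tsum_le_tsum (fun i => hle (i + n)) ((summable_nat_add_iff n).mpr hs) hsg
    _ = (1 - A)⁻¹ * A ^ n := by
        simp only [pow_add]
        rw [tsum_mul_right, tsum_geometric_of_lt_one hA0 hA1]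
    _ = A ^ n / (1 - A) := by ring

lemma gNN_le (h10 : 0 ≤ p10) (hm10 : 0 ≤ pm10) (h01 : 0 ≤ p01) (h0m1 : 0 ≤ p0m1)
    (hsum : p10 + pm10 + p01 + p0m1 = 1) (hA0 : 0 ≤ A) (hA1 : A < 1) (ts : ℤ × ℤ) :
    gNN p10 pm10 p01 p0m1 A ts ≤ A ^ (ts.1.natAbs + ts.2.natAbs) / (1 - A) := by
  apply tail_geom_bound hA0 hA1 (ts.1.natAbs + ts.2.natAbs) _
    (gNN_term_summable h10 hm10 h01 h0m1 hsum hA0 hA1 ts)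
    (fun k => mul_nonneg (pow_nonneg hA0 k) (pkNN_nonneg h10 hm10 h01 h0m1 k ts))
    (fun k hk => by rw [pkNN_eq_zero k ts hk, mul_zero])
    (fun k => by
      calc A ^ k * pkNN p10 pm10 p01 p0m1 k ts ≤ A ^ k * 1 :=
            mul_le_mul_of_nonneg_left (pkNN_le_one h10 hm10 h01 h0m1 hsum k ts)
              (pow_nonneg hA0 k)
        _ = A ^ k := mul_one _)

lemma gNN_finset_sum_le (h10 : 0 ≤ p10) (hm10 : 0 ≤ pm10) (h01 : 0 ≤ p01) (h0m1 : 0 ≤ p0m1)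
    (hsum : p10 + pm10 + p01 + p0m1 = 1) (hA0 : 0 ≤ A) (hA1 : A < 1) (F : Finset (ℤ × ℤ)) :
    ∑ ts ∈ F, gNN p10 pm10 p01 p0m1 A ts ≤ (1 - A)⁻¹ := by
  have hnn := pkNN_nonneg h10 hm10 h01 h0m1
  rw [show ∑ ts ∈ F, gNN p10 pm10 p01 p0m1 A ts
      = ∑ ts ∈ F, ∑' k, A ^ k * pkNN p10 pm10 p01 p0m1 k ts from rfl]
  rw [← Summable.tsum_finsetSum (fun ts _ => gNN_term_summable h10 hm10 h01 h0m1 hsum hA0 hA1 ts)]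
  have hptwise : ∀ k : ℕ, ∑ ts ∈ F, A ^ k * pkNN p10 pm10 p01 p0m1 k ts ≤ A ^ k := fun k => by
    rw [← Finset.mul_sum]
    calc A ^ k * ∑ ts ∈ F, pkNN p10 pm10 p01 p0m1 k ts ≤ A ^ k * 1 :=
          mul_le_mul_of_nonneg_left (pkNN_sum_le h10 hm10 h01 h0m1 hsum k F) (pow_nonneg hA0 k)
      _ = A ^ k := mul_one _
  calc ∑' k, ∑ ts ∈ F, A ^ k * pkNN p10 pm10 p01 p0m1 k ts ≤ ∑' k : ℕ, A ^ k := by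
        apply Summable.tsum_le_tsum hptwise _ (summable_geometric_of_lt_one hA0 hA1)
        exact Summable.of_nonneg_of_le
          (fun k => Finset.sum_nonneg fun ts _ => mul_nonneg (pow_nonneg hA0 k) (hnn k ts))
          hptwise (summable_geometric_of_lt_one hA0 hA1)
    _ = (1 - A)⁻¹ := tsum_geometric_of_lt_one hA0 hA1

lemma rpow_le_eps {x ε pp : ℝ} (hx : 0 ≤ x) (hε : 0 < ε) (hp0 : 0 < pp) (hp1 : pp ≤ 1) :
    x ^ pp ≤ ε ^ pp + ε ^ (pp - 1) * x := by
  rcases le_or_gt x ε with h | h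
  · have h1 : x ^ pp ≤ ε ^ pp := Real.rpow_le_rpow hx h hp0.le
    have h2 : 0 ≤ ε ^ (pp - 1) * x := mul_nonneg (Real.rpow_nonneg hε.le _) hx
    linarith
  · have hx0 : 0 < x := hε.trans h
    have h1 : x ^ pp = x ^ (pp - 1) * x := by
      rw [← Real.rpow_add_one hx0.ne' (pp - 1)]; ring_nf
    have h2 : x ^ (pp - 1) ≤ ε ^ (pp - 1) :=
      Real.rpow_le_rpow_of_nonpos hε h.le (by linarith)
    have h3 : 0 ≤ ε ^ pp := Real.rpow_nonneg hε.le _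
    nlinarith [Real.rpow_nonneg hx0.le (pp - 1)]

lemma tsum_int_ofReal_le {y : ℝ} (h0 : 0 ≤ y) (h1 : y < 1) :
    ∑' t : ℤ, ENNReal.ofReal (y ^ t.natAbs) ≤ ENNReal.ofReal (2 / (1 - y)) := by
  have hsum : Summable (fun n : ℕ => 2 * y ^ n) :=
    (summable_geometric_of_lt_one h0 h1).mul_left 2
  rw [← tsum_nat_add_neg_add_one ENNReal.summable]
  have hpt : ∀ n : ℕ, ENNReal.ofReal (y ^ ((n : ℤ)).natAbs) +
      ENNReal.ofReal (y ^ ((-((n : ℤ) + 1))).natAbs) ≤ ENNReal.ofReal (2 * y ^ n) := by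
    intro n
    have e1 : ((n : ℤ)).natAbs = n := Int.natAbs_natCast n
    have e2 : ((-((n : ℤ) + 1))).natAbs = n + 1 := by
      rw [Int.natAbs_neg]
      have : ((n : ℤ) + 1) = ((n + 1 : ℕ) : ℤ) := by push_cast; ring
      rw [this, Int.natAbs_natCast]
    rw [e1, e2, ← ENNReal.ofReal_add (by positivity) (by positivity)]
    apply ENNReal.ofReal_le_ofReal
    have : y ^ (n + 1) ≤ y ^ n := pow_le_pow_of_le_one h0 h1.le (by omega)
    linarith
  calc ∑' n : ℕ, (ENNReal.ofReal (y ^ ((n:ℤ)).natAbs) +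
        ENNReal.ofReal (y ^ ((-((n:ℤ) + 1))).natAbs))
      ≤ ∑' n : ℕ, ENNReal.ofReal (2 * y ^ n) := ENNReal.tsum_le_tsum hpt
    _ = ENNReal.ofReal (∑' n : ℕ, 2 * y ^ n) :=
        (ENNReal.ofReal_tsum_of_nonneg (fun n => by positivity) hsum).symm
    _ = ENNReal.ofReal (2 / (1 - y)) := by
        rw [tsum_mul_left, tsum_geometric_of_lt_one h0 h1, div_eq_mul_inv]

end auxiliary

set_option maxHeartbeats 1000000

/-- Bound (`Lpbdd2`): for every `p ∈ (0,1]` there is `C = C(p) > 0` such that for every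
nearest-neighbour one-step distribution and every `A ∈ [0,1)`,
`Σ_{(t,s)∈ℤ²} g(t,s)^p ≤ C / (1-A)^{3-2p}`. -/
theorem green_Lp_bound_subcritical (p : ℝ) (hp0 : 0 < p) (hp1 : p ≤ 1) :
    ∃ C : ℝ, 0 < C ∧
      ∀ p10 pm10 p01 p0m1 : ℝ, 0 ≤ p10 → 0 ≤ pm10 → 0 ≤ p01 → 0 ≤ p0m1 →
        p10 + pm10 + p01 + p0m1 = 1 →
        ∀ A : ℝ, A ∈ Set.Ico (0 : ℝ) 1 →
          ∑' ts : ℤ × ℤ, ENNReal.ofReal ((gNN p10 pm10 p01 p0m1 A ts) ^ p) ≤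
            ENNReal.ofReal (C / (1 - A) ^ (3 - 2 * p)) := by
  refine ⟨37 + 65536 / p ^ 6, by positivity, ?_⟩
  intro p10 pm10 p01 p0m1 h10 hm10 h01 h0m1 hsum A hA
  obtain ⟨hA0, hA1⟩ := hA
  set g : ℤ × ℤ → ℝ := gNN p10 pm10 p01 p0m1 A with hg
  have hg0 : ∀ ts, 0 ≤ g ts := gNN_nonneg h10 hm10 h01 h0m1 hA0
  have hgle : ∀ ts : ℤ × ℤ, g ts ≤ A ^ (ts.1.natAbs + ts.2.natAbs) / (1 - A) :=
    gNN_le h10 hm10 h01 h0m1 hsum hA0 hA1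
  have hgF : ∀ F : Finset (ℤ × ℤ), ∑ ts ∈ F, g ts ≤ (1 - A)⁻¹ :=
    gNN_finset_sum_le h10 hm10 h01 h0m1 hsum hA0 hA1
  set u : ℝ := 1 - A with hu
  have hu0 : 0 < u := by rw [hu]; linarith
  have hu1 : u ≤ 1 := by rw [hu]; linarith
  -- setup of the cut-off parameter N
  have hsu : 0 < Real.sqrt u := Real.sqrt_pos.mpr hu0
  have hsu1 : Real.sqrt u ≤ 1 := by
    rw [show (1:ℝ) = Real.sqrt 1 by simp]
    exact Real.sqrt_le_sqrt hu1
  have husq : Real.sqrt u * Real.sqrt u = u := Real.mul_self_sqrt hu0.le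
  have hb : (1:ℝ) ≤ 1 / (u * Real.sqrt u) := by
    rw [le_div_iff₀ (by positivity)]
    nlinarith
  set N : ℕ := ⌈1 / (u * Real.sqrt u)⌉₊ with hN
  have hNge : 1 / (u * Real.sqrt u) ≤ (N : ℝ) := Nat.le_ceil _
  have hNle : (N : ℝ) ≤ 2 / (u * Real.sqrt u) := by
    have h2 : (N : ℝ) < 1 / (u * Real.sqrt u) + 1 :=
      Nat.ceil_lt_add_one (show (0:ℝ) ≤ 1 / (u * Real.sqrt u) by positivity)
    rw [div_eq_mul_inv] at *
    nlinarith
  have hN1 : 1 ≤ N := by exact_mod_cast hb.trans hNge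
  have huN : 1 / Real.sqrt u ≤ u * (N : ℝ) := by
    rw [div_le_iff₀ hsu]
    rw [one_div, inv_le_iff_one_le_mul₀ (by positivity)] at hNge
    nlinarith
  have hN2 : ((N : ℝ))^2 ≤ 4 / u^3 := by
    have h4 : ((N : ℝ))^2 ≤ (2 / (u * Real.sqrt u))^2 := by
      apply sq_le_sq' _ hNle
      nlinarith [Nat.cast_nonneg (α := ℝ) N]
    calc ((N : ℝ))^2 ≤ (2 / (u * Real.sqrt u))^2 := h4
      _ = 4 / u^3 := by
          rw [div_pow]
          congr 1
          · norm_num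
          · ring_nf
            nlinarith [husq]
  -- setup of y = A^(p/2)
  have hA' : A = 1 - u := by rw [hu]; ring
  set y : ℝ := A ^ (p / 2) with hy
  have hy0 : 0 ≤ y := Real.rpow_nonneg hA0 _
  have hy1 : y < 1 := Real.rpow_lt_one hA0 hA1 (by linarith)
  have hy_le : y ≤ 1 - p / 2 * u := by
    have hb2 := Real.geom_mean_le_arith_mean2_weighted (by linarith : (0:ℝ) ≤ p/2)
      (by linarith : (0:ℝ) ≤ 1 - p/2) hA0 (zero_le_one) (by ring)
    rw [Real.one_rpow, mul_one] at hb2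
    rw [hA'] at hb2
    rw [hy, hA']
    nlinarith
  have h1y : p / 2 * u ≤ 1 - y := by linarith
  have hyexp : y ≤ Real.exp (-(u * (p / 2))) := by
    have h1 : A ≤ Real.exp (-u) := by
      have := Real.add_one_le_exp (-u)
      rw [hA']; linarith
    calc y = A ^ (p/2) := hy
      _ ≤ (Real.exp (-u)) ^ (p/2) := Real.rpow_le_rpow hA0 h1 (by linarith)
      _ = Real.exp (-u * (p/2)) := (Real.exp_mul (-u) (p/2)).symm
      _ = Real.exp (-(u * (p/2))) := by ring_nf
  have hyN : y ^ N ≤ 4096 / p ^ 4 * u ^ 2 := by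
    set z : ℝ := u * (p / 2) * N with hz
    have hz0 : 0 < z := by positivity
    have h2 : y ^ N ≤ Real.exp (-(u * (p/2))) ^ N := pow_le_pow_left₀ hy0 hyexp N
    have h3 : Real.exp (-(u * (p/2))) ^ N = Real.exp (-z) := by
      rw [← Real.exp_nat_mul]; congr 1; rw [hz]; ring
    have h4 : Real.exp (-z) ≤ 256 / z ^ 4 := by
      have h5 : z / 4 ≤ Real.exp (z / 4) := by
        have := Real.add_one_le_exp (z/4); linarith
      have h6 : (z/4)^4 ≤ Real.exp (z/4) ^ 4 := pow_le_pow_left₀ (by positivity) h5 4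
      rw [← Real.exp_nat_mul] at h6
      have h7 : ((4:ℕ):ℝ) * (z/4) = z := by push_cast; ring
      rw [h7] at h6
      rw [Real.exp_neg, div_eq_mul_inv]
      have h8 : (z/4)^4 = z^4/256 := by ring
      have h10 : z^4/256 ≤ Real.exp z := by rw [← h8]; exact h6
      have h11 : (Real.exp z)⁻¹ ≤ (z^4/256)⁻¹ := by
        apply inv_anti₀ (by positivity) h10
      calc (Real.exp z)⁻¹ ≤ (z^4/256)⁻¹ := h11
        _ = 256 / z^4 := by rw [inv_div]
    have h12 : p / 2 * (1 / Real.sqrt u) ≤ z := by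
      rw [hz]
      calc p / 2 * (1 / Real.sqrt u) ≤ p / 2 * (u * N) := by
            apply mul_le_mul_of_nonneg_left huN (by linarith)
        _ = u * (p/2) * N := by ring
    have h13 : (p/2)^4 / u^2 ≤ z^4 := by
      have h14 : (p / 2 * (1 / Real.sqrt u))^4 ≤ z^4 :=
        pow_le_pow_left₀ (by positivity) h12 4
      have h15 : (Real.sqrt u)^4 = u^2 := by nlinarith [husq]
      calc (p/2)^4 / u^2 = (p/2)^4 * (1/(Real.sqrt u)^4) := by rw [h15]; ring
        _ = (p / 2 * (1 / Real.sqrt u))^4 := by ring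
        _ ≤ z^4 := h14
    calc y ^ N ≤ Real.exp (-z) := by rw [← h3]; exact h2
      _ ≤ 256 / z ^ 4 := h4
      _ ≤ 256 / ((p/2)^4 / u^2) := by
          apply div_le_div_of_nonneg_left (by norm_num) (by positivity) h13
      _ = 4096 / p ^ 4 * u ^ 2 := by
          rw [div_div_eq_mul_div]
          ring
  -- the near region (a box of side 2N+1)
  set S : Finset (ℤ × ℤ) := (Finset.Icc (-(N:ℤ)) N) ×ˢ (Finset.Icc (-(N:ℤ)) N) with hS
  have hcardIcc : (Finset.Icc (-(N:ℤ)) (N:ℤ)).card = 2 * N + 1 := by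
    rw [Int.card_Icc]; omega
  have hcardS : ((S.card : ℝ)) ≤ 36 / u ^ 3 := by
    rw [hS, Finset.card_product, hcardIcc]
    push_cast
    have hN0 : (1:ℝ) ≤ (N:ℝ) := by exact_mod_cast hN1
    have h9 : 9 * (N:ℝ)^2 ≤ 36 / u^3 := by
      have he : (36:ℝ) / u^3 = 9 * (4 / u^3) := by ring
      rw [he]; linarith
    nlinarith [mul_nonneg (by linarith : (0:ℝ) ≤ 5*(N:ℝ)+1) (by linarith : (0:ℝ) ≤ (N:ℝ)-1)]
  -- near region bound
  have hnear : ∑ ts ∈ S, g ts ^ p ≤ 37 * u ^ (2 * p - 3) := by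
    have hε : (0:ℝ) < u ^ (2:ℝ) := Real.rpow_pos_of_pos hu0 _
    have step2 : ∑ ts ∈ S, g ts ^ p ≤
        S.card * (u ^ (2:ℝ)) ^ p + (u ^ (2:ℝ)) ^ (p - 1) * ∑ ts ∈ S, g ts := by
      calc ∑ ts ∈ S, g ts ^ p
          ≤ ∑ ts ∈ S, ((u ^ (2:ℝ)) ^ p + (u ^ (2:ℝ)) ^ (p - 1) * g ts) :=
            Finset.sum_le_sum (fun ts _ => rpow_le_eps (hg0 ts) hε hp0 hp1)
        _ = S.card * (u ^ (2:ℝ)) ^ p + (u ^ (2:ℝ)) ^ (p - 1) * ∑ ts ∈ S, g ts := by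
            rw [Finset.sum_add_distrib, Finset.sum_const, ← Finset.mul_sum, nsmul_eq_mul]
    have e1 : (u ^ (2:ℝ)) ^ p = u ^ (2 * p) := (Real.rpow_mul hu0.le 2 p).symm
    have e2 : (u ^ (2:ℝ)) ^ (p - 1) = u ^ (2 * (p - 1)) := (Real.rpow_mul hu0.le 2 (p - 1)).symm
    have bound1 : (S.card : ℝ) * u ^ (2 * p) ≤ 36 * u ^ (2 * p - 3) := by
      calc (S.card : ℝ) * u ^ (2 * p) ≤ (36 / u ^ 3) * u ^ (2 * p) :=
            mul_le_mul_of_nonneg_right hcardS (Real.rpow_nonneg hu0.le _)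
        _ = 36 * (u ^ (2 * p) / u ^ ((3:ℕ):ℝ)) := by
            rw [Real.rpow_natCast u 3]
            ring
        _ = 36 * u ^ (2 * p - 3) := by
            rw [← Real.rpow_sub hu0]
            norm_num
    have bound2 : u ^ (2 * (p - 1)) * (∑ ts ∈ S, g ts) ≤ u ^ (2 * p - 3) := by
      calc u ^ (2 * (p - 1)) * (∑ ts ∈ S, g ts) ≤ u ^ (2 * (p - 1)) * u⁻¹ := by
            apply mul_le_mul_of_nonneg_left _ (Real.rpow_nonneg hu0.le _)
            have := hgF S
            rwa [hu] at this ⊢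
        _ = u ^ (2 * (p - 1)) * u ^ (-1 : ℝ) := by rw [Real.rpow_neg_one]
        _ = u ^ (2 * p - 3) := by
            rw [← Real.rpow_add hu0]
            norm_num
            ring_nf
    calc ∑ ts ∈ S, g ts ^ p
        ≤ S.card * (u ^ (2:ℝ)) ^ p + (u ^ (2:ℝ)) ^ (p - 1) * ∑ ts ∈ S, g ts := step2
      _ = S.card * u ^ (2 * p) + u ^ (2 * (p - 1)) * ∑ ts ∈ S, g ts := by rw [e1, e2]
      _ ≤ 36 * u ^ (2 * p - 3) + u ^ (2 * p - 3) := add_le_add bound1 bound2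
      _ = 37 * u ^ (2 * p - 3) := by ring
  -- far region pointwise bound
  have hfar_pt : ∀ ts : ℤ × ℤ, ts ∉ S →
      g ts ^ p ≤ u ^ (-p) * y ^ N * (y ^ ts.1.natAbs * y ^ ts.2.natAbs) := by
    intro ts hts
    have hn : N + 1 ≤ ts.1.natAbs + ts.2.natAbs := by
      rw [hS, Finset.mem_product, Finset.mem_Icc, Finset.mem_Icc] at hts
      omega
    set n := ts.1.natAbs + ts.2.natAbs with hn2
    have key : (A ^ n) ^ p = y ^ (2 * n) := by
      rw [hy, ← Real.rpow_natCast A n, ← Real.rpow_mul hA0,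
        ← Real.rpow_natCast (A ^ (p/2)) (2*n), ← Real.rpow_mul hA0]
      congr 1
      push_cast
      ring
    have h2n : y ^ (2 * n) ≤ y ^ N * (y ^ ts.1.natAbs * y ^ ts.2.natAbs) := by
      have e3 : y ^ (2 * n) = y ^ n * (y ^ ts.1.natAbs * y ^ ts.2.natAbs) := by
        rw [two_mul, pow_add, hn2, pow_add]
      rw [e3]
      apply mul_le_mul_of_nonneg_right (pow_le_pow_of_le_one hy0 hy1.le (by omega))
      positivity
    have hgle' : g ts ≤ A ^ n / u := hgle ts
    calc g ts ^ p ≤ (A ^ n / u) ^ p := Real.rpow_le_rpow (hg0 ts) hgle' hp0.le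
      _ = (A ^ n) ^ p / u ^ p := Real.div_rpow (pow_nonneg hA0 n) hu0.le p
      _ = y ^ (2 * n) * u ^ (-p) := by
          rw [key, Real.rpow_neg hu0.le, div_eq_mul_inv]
      _ ≤ (y ^ N * (y ^ ts.1.natAbs * y ^ ts.2.natAbs)) * u ^ (-p) :=
          mul_le_mul_of_nonneg_right h2n (Real.rpow_nonneg hu0.le _)
      _ = u ^ (-p) * y ^ N * (y ^ ts.1.natAbs * y ^ ts.2.natAbs) := by ring
  -- assemble in ENNReal
  have hnearEN : ∑' ts : ℤ × ℤ, ENNReal.ofReal (if ts ∈ S then g ts ^ p else 0)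
      ≤ ENNReal.ofReal (37 * u ^ (2 * p - 3)) := by
    rw [tsum_eq_sum (s := S) (fun ts hts => by rw [if_neg hts, ENNReal.ofReal_zero])]
    have e4 : ∑ ts ∈ S, ENNReal.ofReal (if ts ∈ S then g ts ^ p else 0)
        = ∑ ts ∈ S, ENNReal.ofReal (g ts ^ p) :=
      Finset.sum_congr rfl (fun ts hts => by rw [if_pos hts])
    rw [e4, ← ENNReal.ofReal_sum_of_nonneg (fun ts _ => Real.rpow_nonneg (hg0 ts) p)]
    exact ENNReal.ofReal_le_ofReal hnear
  have hc0 : 0 ≤ u ^ (-p) * y ^ N := mul_nonneg (Real.rpow_nonneg hu0.le _) (pow_nonneg hy0 _)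
  have h1y' : 0 < 1 - y := by nlinarith
  have h2y0 : (0:ℝ) ≤ 2 / (1 - y) := div_nonneg (by norm_num) h1y'.le
  have hfar_real : u ^ (-p) * y ^ N * (2 / (1 - y) * (2 / (1 - y)))
      ≤ 65536 / p ^ 6 * u ^ (2 * p - 3) := by
    have h2y : 2 / (1 - y) ≤ 4 / (p * u) := by
      rw [div_le_div_iff₀ h1y' (by positivity)]
      nlinarith
    have hquad : 2 / (1 - y) * (2 / (1 - y)) ≤ 16 / (p ^ 2 * u ^ 2) := by
      calc 2 / (1 - y) * (2 / (1 - y)) ≤ (4 / (p * u)) * (4 / (p * u)) :=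
            mul_le_mul h2y h2y h2y0 (by positivity)
        _ = 16 / (p ^ 2 * u ^ 2) := by
            field_simp
            ring
    calc u ^ (-p) * y ^ N * (2 / (1 - y) * (2 / (1 - y)))
        ≤ (u ^ (-p) * (4096 / p ^ 4 * u ^ 2)) * (16 / (p ^ 2 * u ^ 2)) := by
          apply mul_le_mul _ hquad (by positivity) _
          · exact mul_le_mul_of_nonneg_left hyN (Real.rpow_nonneg hu0.le _)
          · positivity
      _ = 65536 / p ^ 6 * u ^ (-p) := by
          field_simp
          ring
      _ ≤ 65536 / p ^ 6 * u ^ (2 * p - 3) := by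
          apply mul_le_mul_of_nonneg_left
            (Real.rpow_le_rpow_of_exponent_ge hu0 hu1 (by linarith)) (by positivity)
  have hfarEN : ∑' ts : ℤ × ℤ,
      ENNReal.ofReal (u ^ (-p) * y ^ N * (y ^ ts.1.natAbs * y ^ ts.2.natAbs))
      ≤ ENNReal.ofReal (65536 / p ^ 6 * u ^ (2 * p - 3)) := by
    calc ∑' ts : ℤ × ℤ, ENNReal.ofReal (u ^ (-p) * y ^ N * (y ^ ts.1.natAbs * y ^ ts.2.natAbs))
        = ∑' ts : ℤ × ℤ, ENNReal.ofReal (u ^ (-p) * y ^ N) *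
            (ENNReal.ofReal (y ^ ts.1.natAbs) * ENNReal.ofReal (y ^ ts.2.natAbs)) :=
          tsum_congr (fun ts => by
            rw [ENNReal.ofReal_mul hc0, ENNReal.ofReal_mul (pow_nonneg hy0 _)])
      _ = ENNReal.ofReal (u ^ (-p) * y ^ N) *
          ∑' ts : ℤ × ℤ, (ENNReal.ofReal (y ^ ts.1.natAbs) * ENNReal.ofReal (y ^ ts.2.natAbs)) :=
          ENNReal.tsum_mul_left
      _ = ENNReal.ofReal (u ^ (-p) * y ^ N) *
          ((∑' t : ℤ, ENNReal.ofReal (y ^ t.natAbs)) * ∑' t : ℤ, ENNReal.ofReal (y ^ t.natAbs)) := by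
          congr 1
          rw [ENNReal.tsum_prod']
          calc ∑' (t : ℤ) (s : ℤ), ENNReal.ofReal (y ^ t.natAbs) * ENNReal.ofReal (y ^ s.natAbs)
              = ∑' t : ℤ, ENNReal.ofReal (y ^ t.natAbs) * ∑' s : ℤ, ENNReal.ofReal (y ^ s.natAbs) :=
                tsum_congr (fun t => ENNReal.tsum_mul_left)
            _ = (∑' t : ℤ, ENNReal.ofReal (y ^ t.natAbs)) * ∑' s : ℤ, ENNReal.ofReal (y ^ s.natAbs) :=
                ENNReal.tsum_mul_right
      _ ≤ ENNReal.ofReal (u ^ (-p) * y ^ N) *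
          (ENNReal.ofReal (2 / (1 - y)) * ENNReal.ofReal (2 / (1 - y))) := by
          have ht := tsum_int_ofReal_le hy0 hy1
          exact mul_le_mul' le_rfl (mul_le_mul' ht ht)
      _ = ENNReal.ofReal (u ^ (-p) * y ^ N * (2 / (1 - y) * (2 / (1 - y)))) := by
          rw [ENNReal.ofReal_mul hc0, ENNReal.ofReal_mul h2y0]
      _ ≤ ENNReal.ofReal (65536 / p ^ 6 * u ^ (2 * p - 3)) :=
          ENNReal.ofReal_le_ofReal hfar_real
  -- final combination
  have hmaster : ∀ ts : ℤ × ℤ, ENNReal.ofReal (g ts ^ p) ≤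
      ENNReal.ofReal (if ts ∈ S then g ts ^ p else 0) +
      ENNReal.ofReal (u ^ (-p) * y ^ N * (y ^ ts.1.natAbs * y ^ ts.2.natAbs)) := by
    intro ts
    by_cases h : ts ∈ S
    · rw [if_pos h]; exact self_le_add_right _ _
    · rw [if_neg h]
      calc ENNReal.ofReal (g ts ^ p)
          ≤ ENNReal.ofReal (u ^ (-p) * y ^ N * (y ^ ts.1.natAbs * y ^ ts.2.natAbs)) :=
            ENNReal.ofReal_le_ofReal (hfar_pt ts h)
        _ ≤ _ := self_le_add_left _ _
  calc ∑' ts : ℤ × ℤ, ENNReal.ofReal (g ts ^ p)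
      ≤ ∑' ts : ℤ × ℤ, (ENNReal.ofReal (if ts ∈ S then g ts ^ p else 0) +
          ENNReal.ofReal (u ^ (-p) * y ^ N * (y ^ ts.1.natAbs * y ^ ts.2.natAbs))) :=
        ENNReal.tsum_le_tsum hmaster
    _ = (∑' ts : ℤ × ℤ, ENNReal.ofReal (if ts ∈ S then g ts ^ p else 0)) +
        ∑' ts : ℤ × ℤ, ENNReal.ofReal (u ^ (-p) * y ^ N * (y ^ ts.1.natAbs * y ^ ts.2.natAbs)) :=
        ENNReal.tsum_add
    _ ≤ ENNReal.ofReal (37 * u ^ (2 * p - 3)) +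
        ENNReal.ofReal (65536 / p ^ 6 * u ^ (2 * p - 3)) := add_le_add hnearEN hfarEN
    _ = ENNReal.ofReal (37 * u ^ (2 * p - 3) + 65536 / p ^ 6 * u ^ (2 * p - 3)) :=
        (ENNReal.ofReal_add
          (mul_nonneg (by norm_num) (Real.rpow_nonneg hu0.le _))
          (mul_nonneg (by positivity) (Real.rpow_nonneg hu0.le _))).symm
    _ = ENNReal.ofReal ((37 + 65536 / p ^ 6) / u ^ (3 - 2 * p)) := by
        congr 1
        rw [eq_div_iff (by
          have := Real.rpow_pos_of_pos hu0 (3 - 2 * p)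
          exact this.ne')]
        rw [show (2 * p - 3 : ℝ) = -(3 - 2 * p) by ring, Real.rpow_neg hu0.le]
        field_simp
end

section
/- For all 1 < α ≤ 2 and 0 < β < α−1, the integral ∫_ℝ ∫_ℝ ∫_0^∞ ( ∫_0^1 ∫_0^1 h₃(t−u, s−v, z) dt ds )^α z^β dz dv du is finite. -/
open MeasureTheory Filter Set

noncomputable def h3 (t s z : ℝ) : ℝ :=
  if 0 < t then 3 / (2 * Real.sqrt (Real.pi * t)) * Real.exp (-3 * z * t - s ^ 2 / (4 * t))
  else 0

/-!
For `τ > 0` the kernel is `h₃(τ, σ, z) = 3 e^{-3zτ} g_{2τ}(σ)`, with `g_{2τ}` the centred Gaussian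
density of variance `2τ`; so its integral in `σ` is `3 e^{-3zτ} ≤ 3`, and its integral over the
whole plane is `1/z`. By translation invariance the integral `L(u, v, z)` of the kernel over the
shifted unit box, which dominates the inner double integral `F`, satisfies `L ≤ min(3, 1/z)`
and `∫∫ L du dv = 1/z`. Hence `F^α ≤ min(3, 1/z)^{α-1} L`, and after integrating out `u` and `v`
there remains `∫_0^∞ min(3, 1/z)^{α-1} z^{β-1} dz`, which converges at `0` because
`β > 0` and at `∞` because `β < α - 1`.
-/

open ProbabilityTheory
open scoped ENNReal

section Translation

variable {G : Type*} [MeasurableSpace G] [AddGroup G] [MeasurableAdd₂ G] {μ : Measure G}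

theorem setLIntegral_comp_sub_right_le [μ.IsAddRightInvariant] (f : G → ℝ≥0∞) (A : Set G)
    (c : G) : ∫⁻ x in A, f (x - c) ∂μ ≤ ∫⁻ x, f x ∂μ :=
  (setLIntegral_le_lintegral A _).trans_eq (lintegral_sub_right_eq_self f c)

theorem lintegral_setLIntegral_comp_sub [MeasurableNeg G] [SFinite μ] [μ.IsAddLeftInvariant]
    [μ.IsNegInvariant] {f : G → ℝ≥0∞} (hf : Measurable f) (A : Set G) :
    ∫⁻ c, ∫⁻ x in A, f (x - c) ∂μ ∂μ = μ A * ∫⁻ x, f x ∂μ := by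
  rw [lintegral_lintegral_swap (f := fun c x => f (x - c)) (by fun_prop)]
  simp_rw [lintegral_sub_left_eq_self f, setLIntegral_const, mul_comm]

end Translation

theorem ofReal_integral_le_lintegral_ofReal {X : Type*} [MeasurableSpace X] {μ : Measure X}
    {f : X → ℝ} (hf : ∀ x, 0 ≤ f x) :
    ENNReal.ofReal (∫ x, f x ∂μ) ≤ ∫⁻ x, ENNReal.ofReal (f x) ∂μ :=
  (Real.ofReal_le_enorm _).trans <| (enorm_integral_le_lintegral_enorm f).trans_eq <|
    lintegral_congr fun x => Real.enorm_of_nonneg (hf x)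

theorem ENNReal.rpow_le_rpow_sub_one_mul {x y b : ℝ≥0∞} {p : ℝ} (hp : 1 ≤ p) (hxy : x ≤ y)
    (hyb : y ≤ b) : x ^ p ≤ b ^ (p - 1) * y := calc
  x ^ p = x ^ (p - 1) * x := by
    conv_lhs => rw [← sub_add_cancel p 1, ENNReal.rpow_add_of_nonneg _ _ (by linarith) zero_le_one,
      ENNReal.rpow_one]
  _ ≤ b ^ (p - 1) * y := mul_le_mul' (ENNReal.rpow_le_rpow (hxy.trans hyb) (by linarith)) hxy

theorem lintegral_min_inv_rpow_mul_rpow_lt_top {c : ℝ≥0∞} (hc : c ≠ ⊤) {β γ : ℝ} (hβ : 0 < β)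
    (hβγ : β < γ) :
    ∫⁻ z in Ioi 0, min c (ENNReal.ofReal z⁻¹) ^ γ * ENNReal.ofReal (z ^ (β - 1)) < ⊤ := by
  rw [← Ioc_union_Ioi_eq_Ioi (zero_le_one (α := ℝ)),
    lintegral_union measurableSet_Ioi (Ioc_disjoint_Ioi le_rfl)]
  refine ENNReal.add_lt_top.2 ⟨?_, ?_⟩
  · calc _ ≤ ∫⁻ z in Ioc 0 1, c ^ γ * ENNReal.ofReal (z ^ (β - 1)) :=
          lintegral_mono fun z =>
            mul_le_mul_left (ENNReal.rpow_le_rpow (min_le_left _ _) (by linarith)) _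
      _ < ⊤ := by
          rw [lintegral_const_mul' _ _ (ENNReal.rpow_ne_top_of_nonneg (by linarith) hc)]
          refine ENNReal.mul_lt_top (ENNReal.rpow_lt_top_of_nonneg (by linarith) hc) ?_
          refine Integrable.lintegral_lt_top ?_
          exact (intervalIntegrable_iff_integrableOn_Ioc_of_le zero_le_one).1
            (intervalIntegral.intervalIntegrable_rpow' (by linarith))
  · calc _ ≤ ∫⁻ z in Ioi 1, ENNReal.ofReal (z ^ (β - γ - 1)) := by
          refine setLIntegral_mono' measurableSet_Ioi fun z hz => ?_
          have hz : (0 : ℝ) < z := zero_lt_one.trans hz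
          calc _ ≤ ENNReal.ofReal z⁻¹ ^ γ * ENNReal.ofReal (z ^ (β - 1)) :=
                mul_le_mul_left (ENNReal.rpow_le_rpow (min_le_right _ _) (by linarith)) _
            _ = _ := by
                rw [ENNReal.ofReal_rpow_of_nonneg (by positivity) (by linarith),
                  ← ENNReal.ofReal_mul (by positivity), Real.inv_rpow hz.le, ← Real.rpow_neg hz.le,
                  ← Real.rpow_add hz]
                ring_nf
      _ < ⊤ := (integrableOn_Ioi_rpow_of_lt (by linarith) one_pos).lintegral_lt_top

lemma h3_nonneg (t s z : ℝ) : 0 ≤ h3 t s z := by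
  unfold h3; split_ifs <;> positivity

lemma h3_of_nonpos {τ : ℝ} (hτ : τ ≤ 0) (σ z : ℝ) : h3 τ σ z = 0 :=
  if_neg hτ.not_gt

@[fun_prop]
lemma Measurable.h3 {X : Type*} [MeasurableSpace X] {f g k : X → ℝ} (hf : Measurable f)
    (hg : Measurable g) (hk : Measurable k) : Measurable fun x => h3 (f x) (g x) (k x) :=
  Measurable.ite (measurableSet_lt measurable_const hf) (by fun_prop) measurable_const

lemma h3_eq_mul_gaussianPDFReal {τ : ℝ} (hτ : 0 < τ) (σ z : ℝ) :
    h3 τ σ z = 3 * Real.exp (-3 * z * τ) * gaussianPDFReal 0 (2 * τ).toNNReal σ := by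
  have hsqrt : √(2 * Real.pi * (2 * τ)) = 2 * √(Real.pi * τ) := by
    rw [show 2 * Real.pi * (2 * τ) = 2 ^ 2 * (Real.pi * τ) by ring,
      Real.sqrt_mul (by positivity), Real.sqrt_sq zero_le_two]
  rw [h3, if_pos hτ, gaussianPDFReal, Real.coe_toNNReal _ (by positivity), hsqrt, sub_zero,
    show -3 * z * τ - σ ^ 2 / (4 * τ) = -3 * z * τ + -σ ^ 2 / (2 * (2 * τ)) by ring, Real.exp_add]
  field_simp

lemma lintegral_h3_of_pos {τ : ℝ} (hτ : 0 < τ) (z : ℝ) :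
    ∫⁻ σ, ENNReal.ofReal (h3 τ σ z) = ENNReal.ofReal (3 * Real.exp (-3 * z * τ)) := by
  simp_rw [h3_eq_mul_gaussianPDFReal hτ, ENNReal.ofReal_mul (by positivity : 0 ≤ 3 * Real.exp _)]
  rw [lintegral_const_mul' _ _ ENNReal.ofReal_ne_top,
    lintegral_gaussianPDFReal_eq_one _ (by simpa using hτ), mul_one]

lemma lintegral_h3_le_three {z : ℝ} (hz : 0 ≤ z) (τ : ℝ) :
    ∫⁻ σ, ENNReal.ofReal (h3 τ σ z) ≤ 3 := by
  rcases lt_or_ge 0 τ with hτ | hτ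
  · rw [lintegral_h3_of_pos hτ]
    refine ENNReal.ofReal_le_of_le_toReal ?_
    have : Real.exp (-3 * z * τ) ≤ 1 := Real.exp_le_one_iff.2 (by nlinarith)
    simp only [ENNReal.toReal_ofNat]
    linarith
  · simp [h3_of_nonpos hτ]

lemma lintegral_lintegral_h3 {z : ℝ} (hz : 0 < z) :
    ∫⁻ τ, ∫⁻ σ, ENNReal.ofReal (h3 τ σ z) = ENNReal.ofReal z⁻¹ := by
  have hind : (fun τ => ∫⁻ σ, ENNReal.ofReal (h3 τ σ z)) =
      (Ioi 0).indicator fun τ => ENNReal.ofReal (3 * Real.exp (-3 * z * τ)) := by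
    ext τ
    rcases lt_or_ge 0 τ with hτ | hτ
    · simp [lintegral_h3_of_pos hτ, hτ]
    · simp [h3_of_nonpos hτ, hτ.not_gt]
  have hneg : -3 * z < 0 := by linarith
  rw [hind, lintegral_indicator measurableSet_Ioi,
    ← ofReal_integral_eq_lintegral_ofReal ((integrableOn_exp_mul_Ioi hneg 0).const_mul 3)
      (Eventually.of_forall fun _ => by positivity),
    integral_const_mul, integral_exp_mul_Ioi hneg]
  rw [mul_zero, Real.exp_zero]
  field_simp

noncomputable def h3Strip (u z : ℝ) : ℝ≥0∞ :=
  ∫⁻ t in Ioc 0 1, ∫⁻ σ, ENNReal.ofReal (h3 (t - u) σ z)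

noncomputable def h3Box (u v z : ℝ) : ℝ≥0∞ :=
  ∫⁻ s in Ioc 0 1, ∫⁻ t in Ioc 0 1, ENNReal.ofReal (h3 (t - u) (s - v) z)

@[fun_prop]
lemma Measurable.h3Strip {X : Type*} [MeasurableSpace X] {f g : X → ℝ} (hf : Measurable f)
    (hg : Measurable g) : Measurable fun x => h3Strip (f x) (g x) := by
  unfold _root_.h3Strip; fun_prop

@[fun_prop]
lemma Measurable.h3Box {X : Type*} [MeasurableSpace X] {f g k : X → ℝ} (hf : Measurable f)
    (hg : Measurable g) (hk : Measurable k) : Measurable fun x => h3Box (f x) (g x) (k x) := by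
  unfold _root_.h3Box; fun_prop

lemma lintegral_setLIntegral_h3_swap (u z : ℝ) :
    ∫⁻ σ, ∫⁻ t in Ioc 0 1, ENNReal.ofReal (h3 (t - u) σ z) = h3Strip u z :=
  lintegral_lintegral_swap (by fun_prop)

lemma h3Box_le_h3Strip (u v z : ℝ) : h3Box u v z ≤ h3Strip u z :=
  (setLIntegral_comp_sub_right_le _ _ v).trans_eq (lintegral_setLIntegral_h3_swap u z)

lemma lintegral_h3Box (u z : ℝ) : ∫⁻ v, h3Box u v z = h3Strip u z := by
  have := lintegral_setLIntegral_comp_sub (μ := volume) (A := Ioc 0 1)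
    (by fun_prop : Measurable fun σ => ∫⁻ t in Ioc 0 1, ENNReal.ofReal (h3 (t - u) σ z))
  rwa [Real.volume_Ioc, sub_zero, ENNReal.ofReal_one, one_mul,
    lintegral_setLIntegral_h3_swap] at this

lemma h3Strip_le_three (u : ℝ) {z : ℝ} (hz : 0 ≤ z) : h3Strip u z ≤ 3 :=
  (setLIntegral_mono' measurableSet_Ioc fun t _ => lintegral_h3_le_three hz _).trans_eq
    (by simp)

lemma h3Strip_le_inv (u : ℝ) {z : ℝ} (hz : 0 < z) : h3Strip u z ≤ ENNReal.ofReal z⁻¹ :=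
  (setLIntegral_comp_sub_right_le _ _ u).trans_eq (lintegral_lintegral_h3 hz)

lemma lintegral_h3Strip {z : ℝ} (hz : 0 < z) : ∫⁻ u, h3Strip u z = ENNReal.ofReal z⁻¹ := by
  have := lintegral_setLIntegral_comp_sub (μ := volume) (A := Ioc 0 1)
    (by fun_prop : Measurable fun τ => ∫⁻ σ, ENNReal.ofReal (h3 τ σ z))
  rwa [Real.volume_Ioc, sub_zero, ENNReal.ofReal_one, one_mul, lintegral_lintegral_h3 hz] at this

lemma ofReal_integral_le_h3Box (u v z : ℝ) :
    ENNReal.ofReal (∫ s in Ioc 0 1, ∫ t in Ioc 0 1, h3 (t - u) (s - v) z) ≤ h3Box u v z :=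
  (ofReal_integral_le_lintegral_ofReal fun _ => integral_nonneg fun _ => h3_nonneg _ _ _).trans
    (lintegral_mono fun _ => ofReal_integral_le_lintegral_ofReal fun _ => h3_nonneg _ _ _)

lemma lintegral_lintegral_setLIntegral_mul_h3Box {φ : ℝ → ℝ≥0∞} (hφ : Measurable φ) :
    ∫⁻ u, ∫⁻ v, ∫⁻ z in Ioi 0, φ z * h3Box u v z = ∫⁻ z in Ioi 0, φ z * ENNReal.ofReal z⁻¹ := by
  calc _ = ∫⁻ u, ∫⁻ z in Ioi 0, φ z * h3Strip u z := lintegral_congr fun u => by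
          rw [lintegral_lintegral_swap (by fun_prop)]
          exact lintegral_congr fun z => by
            rw [lintegral_const_mul _ (by fun_prop), lintegral_h3Box]
    _ = _ := by
          rw [lintegral_lintegral_swap (by fun_prop)]
          refine setLIntegral_congr_fun measurableSet_Ioi fun z hz => ?_
          rw [lintegral_const_mul _ (by fun_prop), lintegral_h3Strip hz]

theorem h3_kernel_integrable_general (α β : ℝ) (hα1 : 1 < α)
    (hβ0 : 0 < β) (hβ : β < α - 1) :
    ∫⁻ u : ℝ, ∫⁻ v : ℝ, ∫⁻ z in Set.Ioi (0 : ℝ),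
      ENNReal.ofReal
        ((∫ s in Set.Ioc (0 : ℝ) 1, ∫ t in Set.Ioc (0 : ℝ) 1, h3 (t - u) (s - v) z) ^ α *
          z ^ β) < ⊤ := by
  set B : ℝ → ℝ≥0∞ := fun z => min 3 (ENNReal.ofReal z⁻¹)
  have hbound : ∀ u v, ∀ z ∈ Ioi (0 : ℝ),
      ENNReal.ofReal
        ((∫ s in Ioc (0 : ℝ) 1, ∫ t in Ioc (0 : ℝ) 1, h3 (t - u) (s - v) z) ^ α * z ^ β) ≤
        B z ^ (α - 1) * ENNReal.ofReal (z ^ β) * h3Box u v z := by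
    intro u v z hz
    have hF : 0 ≤ ∫ s in Ioc (0 : ℝ) 1, ∫ t in Ioc (0 : ℝ) 1, h3 (t - u) (s - v) z :=
      integral_nonneg fun s => integral_nonneg fun t => h3_nonneg _ _ _
    have hB : h3Box u v z ≤ B z := le_min
      ((h3Box_le_h3Strip u v z).trans (h3Strip_le_three u (le_of_lt hz)))
      ((h3Box_le_h3Strip u v z).trans (h3Strip_le_inv u hz))
    rw [ENNReal.ofReal_mul (Real.rpow_nonneg hF α),
      ← ENNReal.ofReal_rpow_of_nonneg hF (by linarith), mul_right_comm]
    exact mul_le_mul_left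
      (ENNReal.rpow_le_rpow_sub_one_mul hα1.le (ofReal_integral_le_h3Box u v z) hB) _
  calc _ ≤ ∫⁻ u, ∫⁻ v, ∫⁻ z in Ioi 0, B z ^ (α - 1) * ENNReal.ofReal (z ^ β) * h3Box u v z :=
        lintegral_mono fun u => lintegral_mono fun v =>
          setLIntegral_mono' measurableSet_Ioi (hbound u v)
    _ = ∫⁻ z in Ioi 0, B z ^ (α - 1) * ENNReal.ofReal (z ^ (β - 1)) := by
        rw [lintegral_lintegral_setLIntegral_mul_h3Box (by fun_prop)]
        refine setLIntegral_congr_fun measurableSet_Ioi fun z hz => ?_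
        rw [mul_assoc, ← ENNReal.ofReal_mul (Real.rpow_nonneg (le_of_lt hz) β),
          ← Real.rpow_neg_one, ← Real.rpow_add hz, ← sub_eq_add_neg]
    _ < ⊤ := lintegral_min_inv_rpow_mul_rpow_lt_top (by simp) hβ0 hβ

/-- Proposition 5.1 (i), case `γ = 1/2`: for `1 < α ≤ 2` and `0 < β < α - 1`,
`∫_ℝ ∫_ℝ ∫_0^∞ (∫_0^1 ∫_0^1 h₃(t-u, s-v, z) dt ds)^α z^β dz dv du < ∞`. -/
theorem h3_kernel_integrable (α β : ℝ) (hα1 : 1 < α) (hα2 : α ≤ 2)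
    (hβ0 : 0 < β) (hβ : β < α - 1) :
    ∫⁻ u : ℝ, ∫⁻ v : ℝ, ∫⁻ z in Set.Ioi (0 : ℝ),
      ENNReal.ofReal
        ((∫ s in Set.Ioc (0 : ℝ) 1, ∫ t in Set.Ioc (0 : ℝ) 1, h3 (t - u) (s - v) z) ^ α *
          z ^ β) < ⊤ :=
  h3_kernel_integrable_general α β hα1 hβ0 hβ
end

section
/- For all 1 < α ≤ 2 and 0 < β < α−1, the integral ∫_ℝ ∫_ℝ ∫_0^∞ ( 1_{(0,1)}(v) · ∫_0^1 ∫_ℝ h₃(t−u, w, z) dw dt )^α z^β dz dv du is finite, where 1_{(0,1)} is the indicator function of the interval (0,1). -/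
/-!
Integrating out the Gaussian variable `w` leaves the kernel `3 e^{-3zt} 1_{t>0}`. Its integral
`G(u, z)` over `t ∈ (0, 1]` vanishes for `u ≥ 1` and, shifting the start of the kernel to
`max u 0`, is at most `min (3, 1/z) e^{3z min(u, 0)}`. Raising this to the power `α` and
integrating over `u < 1` (after Tonelli) leaves the weight `(1 + 1/(3αz)) min(3, 1/z)^α z^β`,
which is `O(z^{β-1})` near `0` and `O(z^{β-α})` at infinity, hence integrable since
`0 < β < α - 1`. The `v`-integral only contributes the factor `|(0, 1)| = 1`.
-/

open MeasureTheory Filter Set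

noncomputable def h3Marginal (t z : ℝ) : ℝ :=
  (Ioi 0).indicator (fun t => 3 * Real.exp (-3 * z * t)) t

theorem integral_h3 (t z : ℝ) : ∫ w, h3 t w z = h3Marginal t z := by
  by_cases ht : 0 < t
  · have hπt : 0 < Real.pi * t := mul_pos Real.pi_pos ht
    have hsplit : ∀ w, h3 t w z = 3 / (2 * Real.sqrt (Real.pi * t)) * Real.exp (-3 * z * t) *
        Real.exp (-(4 * t)⁻¹ * w ^ 2) := fun w => by
      rw [h3, if_pos ht, mul_assoc (3 / _), ← Real.exp_add]
      congr 2
      field_simp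
      ring
    have hsqrt : Real.sqrt (Real.pi / (4 * t)⁻¹) = 2 * Real.sqrt (Real.pi * t) := by
      rw [div_inv_eq_mul, show Real.pi * (4 * t) = 2 ^ 2 * (Real.pi * t) by ring,
        Real.sqrt_mul (by norm_num), Real.sqrt_sq (by norm_num)]
    simp_rw [hsplit, integral_const_mul, integral_gaussian, hsqrt, h3Marginal,
      indicator_of_mem (mem_Ioi.2 ht)]
    field_simp
  · simp [h3, h3Marginal, ht]

theorem h3Marginal_nonneg (t z : ℝ) : 0 ≤ h3Marginal t z :=
  indicator_nonneg (fun _ _ => by positivity) t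

theorem h3Marginal_le_three {z : ℝ} (hz : 0 ≤ z) (t : ℝ) : h3Marginal t z ≤ 3 := by
  by_cases ht : 0 < t
  · rw [h3Marginal, indicator_of_mem (mem_Ioi.2 ht)]
    have : Real.exp (-3 * z * t) ≤ 1 := Real.exp_le_one_iff.2 (by nlinarith)
    linarith
  · rw [h3Marginal, indicator_of_notMem (by simpa using ht)]
    norm_num

theorem integrable_h3Marginal {z : ℝ} (hz : 0 < z) : Integrable (h3Marginal · z) :=
  (integrable_indicator_iff measurableSet_Ioi).2
    ((integrableOn_exp_mul_Ioi (by linarith) 0).const_mul 3)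

theorem integral_h3Marginal {z : ℝ} (hz : 0 < z) : ∫ t, h3Marginal t z = z⁻¹ := by
  simp only [h3Marginal]
  rw [integral_indicator measurableSet_Ioi, integral_const_mul,
    integral_exp_mul_Ioi (by linarith) 0]
  field_simp
  simp

theorem h3Marginal_sub {t : ℝ} (ht : 0 < t) (u z : ℝ) :
    h3Marginal (t - u) z = Real.exp (3 * z * min u 0) * h3Marginal (t - max u 0) z := by
  rcases le_total u 0 with hu | hu
  · rw [min_eq_left hu, max_eq_right hu, h3Marginal, h3Marginal,
      indicator_of_mem (mem_Ioi.2 (by linarith)), indicator_of_mem (mem_Ioi.2 (by linarith)),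
      mul_left_comm, ← Real.exp_add]
    ring_nf
  · rw [min_eq_right hu, max_eq_left hu, mul_zero, Real.exp_zero, one_mul]

theorem setIntegral_h3Marginal_sub_le {z : ℝ} (hz : 0 < z) {s : Set ℝ} (hs : volume s < ⊤)
    (m : ℝ) : ∫ t in s, h3Marginal (t - m) z ≤ min (3 * volume.real s) z⁻¹ := by
  refine le_min ?_ ?_
  · refine (Real.le_norm_self _).trans (norm_setIntegral_le_of_norm_le_const hs fun t _ => ?_)
    rw [Real.norm_of_nonneg (h3Marginal_nonneg _ _)]
    exact h3Marginal_le_three hz.le _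
  · calc ∫ t in s, h3Marginal (t - m) z
        ≤ ∫ t, h3Marginal (t - m) z :=
          setIntegral_le_integral ((integrable_h3Marginal hz).comp_sub_right m)
            (ae_of_all _ fun _ => h3Marginal_nonneg _ _)
      _ = z⁻¹ := by rw [integral_sub_right_eq_self (h3Marginal · z), integral_h3Marginal hz]

noncomputable def h3TimeIntegral (u z : ℝ) : ℝ :=
  ∫ t in Ioc 0 1, ∫ w, h3 (t - u) w z

theorem h3TimeIntegral_eq_setIntegral (u z : ℝ) :
    h3TimeIntegral u z = ∫ t in Ioc 0 1, h3Marginal (t - u) z := by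
  simp_rw [h3TimeIntegral, integral_h3]

theorem h3TimeIntegral_nonneg (u z : ℝ) : 0 ≤ h3TimeIntegral u z := by
  rw [h3TimeIntegral_eq_setIntegral]
  exact setIntegral_nonneg measurableSet_Ioc fun _ _ => h3Marginal_nonneg _ _

theorem h3TimeIntegral_of_one_le {u : ℝ} (hu : 1 ≤ u) (z : ℝ) : h3TimeIntegral u z = 0 := by
  rw [h3TimeIntegral_eq_setIntegral,
    setIntegral_congr_fun measurableSet_Ioc (g := fun _ => 0) fun t ht => ?_, integral_zero]
  exact indicator_of_notMem (by simpa using ht.2.trans hu) _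

theorem h3TimeIntegral_le {z : ℝ} (hz : 0 < z) (u : ℝ) :
    h3TimeIntegral u z ≤ Real.exp (3 * z * min u 0) * min 3 z⁻¹ := by
  rw [h3TimeIntegral_eq_setIntegral,
    setIntegral_congr_fun measurableSet_Ioc fun t ht => h3Marginal_sub ht.1 u z,
    integral_const_mul]
  gcongr
  simpa using setIntegral_h3Marginal_sub_le hz (s := Ioc 0 1) (by simp) (max u 0)

theorem lintegral_lintegral_indicator_const_rpow_mul {ι X : Type*} [MeasurableSpace ι]
    [MeasurableSpace X] (ν : Measure ι) (μ : Measure X) {s : Set ι} (hs : MeasurableSet s)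
    {α : ℝ} (hα : α ≠ 0) (F g : X → ℝ) :
    ∫⁻ v, ∫⁻ z, ENNReal.ofReal ((s.indicator (fun _ => F z) v) ^ α * g z) ∂μ ∂ν
      = ν s * ∫⁻ z, ENNReal.ofReal (F z ^ α * g z) ∂μ := by
  have hv : ∀ v, ∫⁻ z, ENNReal.ofReal ((s.indicator (fun _ => F z) v) ^ α * g z) ∂μ
      = s.indicator (fun _ => ∫⁻ z, ENNReal.ofReal (F z ^ α * g z) ∂μ) v := fun v => by
    by_cases hv : v ∈ s <;> simp [hv, Real.zero_rpow hα]
  simp_rw [hv, lintegral_indicator_const hs, mul_comm]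

theorem ofReal_h3TimeIntegral_rpow_mul_le {α z : ℝ} (hα : 0 ≤ α) (hz : 0 < z) (β u : ℝ) :
    ENNReal.ofReal (h3TimeIntegral u z ^ α * z ^ β)
      ≤ ENNReal.ofReal (Real.exp (3 * α * z * min u 0)) *
          ENNReal.ofReal (min 3 z⁻¹ ^ α * z ^ β) := by
  rw [← ENNReal.ofReal_mul (Real.exp_nonneg _), ← mul_assoc]
  refine ENNReal.ofReal_le_ofReal (mul_le_mul_of_nonneg_right ?_ (by positivity))
  calc h3TimeIntegral u z ^ α
      ≤ (Real.exp (3 * z * min u 0) * min 3 z⁻¹) ^ α := by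
        gcongr
        · exact h3TimeIntegral_nonneg u z
        · exact h3TimeIntegral_le hz u
    _ = Real.exp (3 * α * z * min u 0) * min 3 z⁻¹ ^ α := by
        rw [Real.mul_rpow (Real.exp_nonneg _) (by positivity), ← Real.exp_mul]
        ring_nf

theorem lintegral_Iio_exp_mul_min_zero {c a : ℝ} (hc : 0 < c) (ha : 0 < a) :
    ∫⁻ u in Iio a, ENNReal.ofReal (Real.exp (c * min u 0)) = ENNReal.ofReal (c⁻¹ + a) := by
  rw [← Iic_union_Ioo_eq_Iio ha, lintegral_union measurableSet_Ioo
      ((Iic_disjoint_Ioi le_rfl).mono_right Ioo_subset_Ioi_self),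
    ENNReal.ofReal_add (by positivity) ha.le]
  congr 1
  · rw [setLIntegral_congr_fun measurableSet_Iic fun u (hu : u ≤ 0) => by rw [min_eq_left hu],
      ← ofReal_integral_eq_lintegral_ofReal (integrableOn_exp_mul_Iic hc 0)
        (ae_of_all _ fun _ => Real.exp_nonneg _),
      integral_exp_mul_Iic hc, mul_zero, Real.exp_zero, one_div]
  · rw [setLIntegral_congr_fun measurableSet_Ioo fun u (hu : u ∈ Ioo 0 a) => by
        rw [min_eq_right hu.1.le, mul_zero, Real.exp_zero, ENNReal.ofReal_one],
      setLIntegral_const, Real.volume_Ioo, sub_zero, one_mul]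

theorem lintegral_Ioi_ofReal_lt_top_of_le_rpow {f : ℝ → ℝ} {a b C₀ C₁ : ℝ}
    (ha : -1 < a) (hb : b < -1) (h₀ : ∀ z ∈ Ioc 0 1, f z ≤ C₀ * z ^ a)
    (h₁ : ∀ z ∈ Ioi 1, f z ≤ C₁ * z ^ b) :
    ∫⁻ z in Ioi 0, ENNReal.ofReal (f z) < ⊤ := by
  rw [← Ioc_union_Ioi_eq_Ioi zero_le_one]
  refine (lintegral_union_le _ _ _).trans_lt (ENNReal.add_lt_top.2 ⟨?_, ?_⟩)
  · have hint : IntegrableOn (fun z => C₀ * z ^ a) (Ioc 0 1) :=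
      ((intervalIntegrable_iff_integrableOn_Ioc_of_le zero_le_one).1
        (intervalIntegral.intervalIntegrable_rpow' ha)).const_mul C₀
    exact (setLIntegral_mono' measurableSet_Ioc fun z hz =>
      ENNReal.ofReal_le_ofReal (h₀ z hz)).trans_lt hint.setLIntegral_lt_top
  · have hint : IntegrableOn (fun z => C₁ * z ^ b) (Ioi 1) :=
      (integrableOn_Ioi_rpow_of_lt hb one_pos).const_mul C₁
    exact (setLIntegral_mono' measurableSet_Ioi fun z hz =>
      ENNReal.ofReal_le_ofReal (h₁ z hz)).trans_lt hint.setLIntegral_lt_top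

noncomputable def h3Weight (α β z : ℝ) : ℝ :=
  ((3 * α * z)⁻¹ + 1) * (min 3 z⁻¹ ^ α * z ^ β)

theorem h3Weight_le_of_le_one {α z : ℝ} (hα : 0 < α) (hz : z ∈ Ioc 0 1) (β : ℝ) :
    h3Weight α β z ≤ ((3 * α)⁻¹ + 1) * 3 ^ α * z ^ (β - 1) := by
  obtain ⟨hz0, hz1⟩ := hz
  have hinv : (3 * α * z)⁻¹ + 1 ≤ ((3 * α)⁻¹ + 1) * z⁻¹ := by
    have : 1 ≤ z⁻¹ := one_le_inv₀ hz0 |>.2 hz1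
    rw [mul_inv (3 * α), add_mul, one_mul]
    gcongr
  calc h3Weight α β z ≤ ((3 * α)⁻¹ + 1) * z⁻¹ * (3 ^ α * z ^ β) := by
        unfold h3Weight
        gcongr
        exact min_le_left _ _
    _ = ((3 * α)⁻¹ + 1) * 3 ^ α * z ^ (β - 1) := by
        rw [Real.rpow_sub_one hz0.ne']
        ring

theorem h3Weight_le_of_one_lt {α z : ℝ} (hα : 0 < α) (hz : 1 < z) (β : ℝ) :
    h3Weight α β z ≤ ((3 * α)⁻¹ + 1) * z ^ (β - α) := by
  have hz0 : 0 < z := one_pos.trans hz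
  calc h3Weight α β z ≤ ((3 * α)⁻¹ + 1) * (z⁻¹ ^ α * z ^ β) := by
        unfold h3Weight
        have h3αz : 3 * α ≤ 3 * α * z := le_mul_of_one_le_right (by positivity) hz.le
        gcongr
        exact min_le_right _ _
    _ = ((3 * α)⁻¹ + 1) * z ^ (β - α) := by
        rw [Real.inv_rpow hz0.le, ← Real.rpow_neg hz0.le, ← Real.rpow_add hz0, neg_add_eq_sub]

theorem lintegral_h3Weight_lt_top {α β : ℝ} (hβ0 : 0 < β) (hβ : β < α - 1) :
    ∫⁻ z in Ioi 0, ENNReal.ofReal (h3Weight α β z) < ⊤ :=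
  have hα : 0 < α := by linarith
  lintegral_Ioi_ofReal_lt_top_of_le_rpow (by linarith) (by linarith)
    (fun z hz => h3Weight_le_of_le_one hα hz β) (fun z hz => h3Weight_le_of_one_lt hα hz β)

theorem lintegral_lintegral_h3TimeIntegral_le {α : ℝ} (hα : 0 < α) (β : ℝ) :
    ∫⁻ u, ∫⁻ z in Ioi 0, ENNReal.ofReal (h3TimeIntegral u z ^ α * z ^ β)
      ≤ ∫⁻ z in Ioi 0, ENNReal.ofReal (h3Weight α β z) := by
  have hsupp : (Function.support fun u => ∫⁻ z in Ioi 0,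
      ENNReal.ofReal (h3TimeIntegral u z ^ α * z ^ β)) ⊆ Iio 1 :=
    Function.support_subset_iff'.2 fun u hu => by
      simp [h3TimeIntegral_of_one_le (not_lt.1 hu), Real.zero_rpow hα.ne']
  calc ∫⁻ u, ∫⁻ z in Ioi 0, ENNReal.ofReal (h3TimeIntegral u z ^ α * z ^ β)
      = ∫⁻ u in Iio 1, ∫⁻ z in Ioi 0, ENNReal.ofReal (h3TimeIntegral u z ^ α * z ^ β) :=
        (setLIntegral_eq_of_support_subset hsupp).symm
    _ ≤ ∫⁻ u in Iio 1, ∫⁻ z in Ioi 0, ENNReal.ofReal (Real.exp (3 * α * z * min u 0)) *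
          ENNReal.ofReal (min 3 z⁻¹ ^ α * z ^ β) :=
        lintegral_mono fun u => setLIntegral_mono' measurableSet_Ioi fun z hz =>
          ofReal_h3TimeIntegral_rpow_mul_le hα.le hz β u
    _ = ∫⁻ z in Ioi 0, ∫⁻ u in Iio 1, ENNReal.ofReal (Real.exp (3 * α * z * min u 0)) *
          ENNReal.ofReal (min 3 z⁻¹ ^ α * z ^ β) :=
        lintegral_lintegral_swap (by fun_prop)
    _ = ∫⁻ z in Ioi 0, ENNReal.ofReal (h3Weight α β z) :=
        setLIntegral_congr_fun measurableSet_Ioi fun z (hz : 0 < z) => by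
          rw [lintegral_mul_const' _ _ ENNReal.ofReal_ne_top,
            lintegral_Iio_exp_mul_min_zero (by positivity) one_pos,
            ← ENNReal.ofReal_mul (by positivity), h3Weight]

theorem h3_kernel_integrable_marginal_general (α β : ℝ) (hβ0 : 0 < β) (hβ : β < α - 1) :
    ∫⁻ u : ℝ, ∫⁻ v : ℝ, ∫⁻ z in Set.Ioi (0 : ℝ),
      ENNReal.ofReal
        (((Set.Ioo (0 : ℝ) 1).indicator
            (fun _ => ∫ t in Set.Ioc (0 : ℝ) 1, ∫ w : ℝ, h3 (t - u) w z) v) ^ α *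
          z ^ β) < ⊤ := by
  have hα : 0 < α := by linarith
  simp only [← h3TimeIntegral.eq_1]
  simp_rw [lintegral_lintegral_indicator_const_rpow_mul _ _ measurableSet_Ioo hα.ne',
    Real.volume_Ioo, sub_zero, ENNReal.ofReal_one, one_mul]
  exact (lintegral_lintegral_h3TimeIntegral_le hα β).trans_lt (lintegral_h3Weight_lt_top hβ0 hβ)

/-- Proposition 5.1 (i), case `γ > 1/2`: for `1 < α ≤ 2` and `0 < β < α - 1`,
`∫_ℝ ∫_ℝ ∫_0^∞ (1_{(0,1)}(v) ∫_0^1 ∫_ℝ h₃(t-u, w, z) dw dt)^α z^β dz dv du < ∞`. -/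
theorem h3_kernel_integrable_marginal (α β : ℝ) (hα1 : 1 < α) (hα2 : α ≤ 2)
    (hβ0 : 0 < β) (hβ : β < α - 1) :
    ∫⁻ u : ℝ, ∫⁻ v : ℝ, ∫⁻ z in Set.Ioi (0 : ℝ),
      ENNReal.ofReal
        (((Set.Ioo (0 : ℝ) 1).indicator
            (fun _ => ∫ t in Set.Ioc (0 : ℝ) 1, ∫ w : ℝ, h3 (t - u) w z) v) ^ α *
          z ^ β) < ⊤ :=
  h3_kernel_integrable_marginal_general α β hβ0 hβ
end

section
/- For every d ∈ (0, 1/2), lim_{n→∞} n^{−1−2d} ∫_{−π}^{π} D_n²(x) · |1−e^{−ix}|^{−2d} dx = ∫_ℝ |1−e^{−ix}|² · |x|^{−2−2d} dx, and the integral on the right-hand side is finite. -/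
/-! With `chord x = ‖1 - e^{-ix}‖ = 2 |sin (x / 2)|`, summing the geometric series gives
`D_n²(x) chord(x)² = chord(n x)²`. Substituting `x = u / n` turns the normalized integral into
`∫_{|u| ≤ nπ} chord(u)² (n chord(u / n))^{-2-2d} du`. Pointwise `n chord(u / n) → |u|`, and by
Jordan's inequality `n chord(u / n) ≥ (2 / π) |u|` for `|u| ≤ nπ`, so the integrands are dominated
by a multiple of the limit `chord(u)² |u|^{-2-2d}`. The limit is integrable, being
`O(|u|^{-2d})` at `0` and `O(|u|^{-2-2d})` at infinity, and dominated convergence concludes. -/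

open MeasureTheory Filter Set

/-- Squared Dirichlet-type kernel `D_n²(x) = |Σ_{t=1}^n e^{itx}|²`. -/
noncomputable def Dsq (n : ℕ) (x : ℝ) : ℝ :=
  ‖∑ t ∈ Finset.Icc 1 n, Complex.exp (Complex.I * (t : ℂ) * (x : ℂ))‖ ^ 2

open scoped Real Topology

noncomputable def chord (x : ℝ) : ℝ := 2 * |Real.sin (x / 2)|

lemma chord_nonneg (x : ℝ) : 0 ≤ chord x := by unfold chord; positivity

@[simp] lemma chord_zero : chord 0 = 0 := by simp [chord]

@[simp] lemma chord_neg (x : ℝ) : chord (-x) = chord x := by simp [chord, neg_div]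

@[fun_prop] lemma continuous_chord : Continuous chord := by unfold chord; fun_prop

lemma chord_le_abs (x : ℝ) : chord x ≤ |x| := by
  have := Real.abs_sin_le_abs (x := x / 2)
  rw [abs_div, abs_two] at this
  unfold chord; linarith

lemma chord_le_two (x : ℝ) : chord x ≤ 2 := by
  have := Real.abs_sin_le_one (x / 2)
  unfold chord; linarith

lemma two_div_pi_mul_abs_le_chord {x : ℝ} (hx : |x| ≤ π) : 2 / π * |x| ≤ chord x := by
  have h : |x / 2| ≤ π / 2 := by rw [abs_div, abs_two]; linarith
  have := Real.mul_abs_le_abs_sin h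
  rw [abs_div, abs_two] at this
  unfold chord; linarith

lemma two_div_pi_mul_abs_le_mul_chord_div {t u : ℝ} (ht : 0 < t) (hu : |u| ≤ t * π) :
    2 / π * |u| ≤ t * chord (u / t) := by
  have h := two_div_pi_mul_abs_le_chord (x := u / t)
    (by rw [abs_div, abs_of_pos ht, div_le_iff₀ ht]; linarith)
  rw [abs_div, abs_of_pos ht] at h
  calc 2 / π * |u| = t * (2 / π * (|u| / t)) := by field_simp
    _ ≤ t * chord (u / t) := by gcongr

lemma chord_eq_abs_mul_abs_sinc (x : ℝ) : chord x = |x| * |Real.sinc (x / 2)| := by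
  rcases eq_or_ne x 0 with rfl | hx
  · simp
  rw [Real.sinc_of_ne_zero (by simpa using hx), abs_div, abs_div, abs_two, chord]
  field_simp

lemma norm_exp_I_mul_sub_one_eq_chord (x : ℝ) : ‖Complex.exp (Complex.I * x) - 1‖ = chord x := by
  rw [Complex.norm_exp_I_mul_ofReal_sub_one, Real.norm_eq_abs, abs_mul, abs_two, chord]

lemma norm_one_sub_exp_neg_I_mul_eq_chord (x : ℝ) :
    ‖1 - Complex.exp (-Complex.I * x)‖ = chord x := by
  rw [norm_sub_rev, show -Complex.I * x = Complex.I * ((-x : ℝ) : ℂ) by push_cast; ring,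
    norm_exp_I_mul_sub_one_eq_chord, chord_neg]

lemma Dsq_mul_chord_sq (n : ℕ) (x : ℝ) : Dsq n x * chord x ^ 2 = chord (n * x) ^ 2 := by
  set z := Complex.exp (Complex.I * x)
  have hz : ‖z‖ = 1 := Complex.norm_exp_I_mul_ofReal x
  have hsum : ∑ t ∈ Finset.Icc 1 n, Complex.exp (Complex.I * t * x) =
      z * ∑ i ∈ Finset.range n, z ^ i := by
    simp_rw [Finset.mul_sum, ← pow_succ']
    rw [Finset.range_eq_Ico, Finset.sum_Ico_add' (fun i => z ^ i), zero_add,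
      Finset.Ico_add_one_right_eq_Icc]
    refine Finset.sum_congr rfl fun t _ => ?_
    rw [← Complex.exp_nat_mul]
    ring_nf
  have hgeom := congrArg (‖·‖) (geom_sum_mul z n)
  rw [show z ^ n = Complex.exp (Complex.I * ((n * x : ℝ) : ℂ)) by
    rw [← Complex.exp_nat_mul]; push_cast; ring_nf, norm_mul,
    norm_exp_I_mul_sub_one_eq_chord, norm_exp_I_mul_sub_one_eq_chord] at hgeom
  rw [Dsq, hsum, norm_mul, hz, one_mul, ← mul_pow, hgeom]

lemma tendsto_mul_chord_div_atTop (u : ℝ) :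
    Tendsto (fun t => t * chord (u / t)) atTop (𝓝 |u|) := by
  have hsinc : Tendsto (fun t => |Real.sinc (u / t / 2)|) atTop (𝓝 1) := by
    have h0 : Tendsto (fun t : ℝ => u / t / 2) atTop (𝓝 0) := by
      simpa using (tendsto_const_nhds.div_atTop (tendsto_id (α := ℝ))).div_const 2
    have := (Real.continuous_sinc.abs.tendsto 0).comp h0
    rwa [Real.sinc_zero, abs_one] at this
  refine (by simpa using hsinc.const_mul |u| :).congr' ?_
  filter_upwards [eventually_gt_atTop 0] with t ht
  rw [chord_eq_abs_mul_abs_sinc, abs_div, abs_of_pos ht]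
  field_simp

lemma integrable_chord_sq_mul_abs_rpow {r : ℝ} (hr₃ : -3 < r) (hr₁ : r < -1) :
    Integrable (fun u => chord u ^ 2 * |u| ^ r) := by
  have hmeas : AEStronglyMeasurable (fun u => chord u ^ 2 * |u| ^ r) volume :=
    (by fun_prop : Measurable fun u => chord u ^ 2 * |u| ^ r).aestronglyMeasurable
  have hloc : LocallyIntegrable (fun u => chord u ^ 2 * |u| ^ r) := by
    refine locallyIntegrable_of_norm_le_rpow (C := 1) (α := -(2 + r)) (by simp) (by simp; linarith)
      ?_ hmeas
    filter_upwards [compl_mem_ae_iff.2 (measure_singleton (0 : ℝ))] with u hu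
    have hu' : 0 < |u| := abs_pos.2 hu
    rw [Real.norm_of_nonneg (by have := chord_nonneg u; positivity), neg_neg, one_mul,
      Real.norm_eq_abs, Real.rpow_add hu', Real.rpow_two]
    gcongr
    exacts [chord_nonneg u, chord_le_abs u]
  refine hloc.integrable_of_isBigO_atTop_of_norm_isNegInvariant (g := fun u => u ^ r) ?_ ?_ ?_
  · exact Eventually.of_forall fun u => by simp
  · refine Asymptotics.IsBigO.of_bound 4 ?_
    filter_upwards [eventually_gt_atTop 0] with u hu
    have hc : chord u ^ 2 ≤ 4 := by nlinarith [chord_nonneg u, chord_le_two u]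
    rw [abs_of_pos hu, norm_mul, Real.norm_of_nonneg (Real.rpow_nonneg hu.le r), norm_pow,
      Real.norm_of_nonneg (chord_nonneg u)]
    gcongr
  · exact ⟨Ioi 1, Ioi_mem_atTop 1, integrableOn_Ioi_rpow_of_lt hr₁ one_pos⟩

lemma tendsto_setIntegral_Icc_of_dominated {ι E : Type*} [NormedAddCommGroup E]
    [NormedSpace ℝ E] {l : Filter ι} [l.IsCountablyGenerated] {F : ι → ℝ → E} {f : ℝ → E}
    {a : ι → ℝ} (bound : ℝ → ℝ) (ha : Tendsto a l atTop)
    (hF_meas : ∀ᶠ i in l, AEStronglyMeasurable (F i))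
    (h_bound : ∀ᶠ i in l, ∀ᵐ x, x ∈ Icc (-a i) (a i) → ‖F i x‖ ≤ bound x)
    (bound_integrable : Integrable bound)
    (h_lim : ∀ᵐ x, Tendsto (fun i => F i x) l (𝓝 (f x))) :
    Tendsto (fun i => ∫ x in Icc (-a i) (a i), F i x) l (𝓝 (∫ x, f x)) := by
  simp_rw [← integral_indicator measurableSet_Icc]
  refine tendsto_integral_filter_of_dominated_convergence (fun x => ‖bound x‖)
    (hF_meas.mono fun i h => h.indicator measurableSet_Icc) ?_ bound_integrable.norm ?_
  · filter_upwards [h_bound] with i hi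
    filter_upwards [hi] with x hx
    by_cases hmem : x ∈ Icc (-a i) (a i)
    · rw [indicator_of_mem hmem]; exact (hx hmem).trans (le_abs_self _)
    · rw [indicator_of_notMem hmem, norm_zero]; exact norm_nonneg _
  · filter_upwards [h_lim] with x hx
    refine hx.congr' ?_
    filter_upwards [ha.eventually_ge_atTop |x|] with i hi
    rw [indicator_of_mem (show x ∈ Icc (-a i) (a i) from abs_le.1 hi)]

lemma setIntegral_Icc_comp_mul {E : Type*} [NormedAddCommGroup E] [NormedSpace ℝ E] (f : ℝ → E)
    (a : ℝ) {c : ℝ} (hc : 0 < c) :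
    ∫ x in Icc (-a) a, f (c * x) = c⁻¹ • ∫ u in Icc (-(c * a)) (c * a), f u := by
  have := Measure.setIntegral_comp_smul_of_pos volume f (Icc (-a) a) hc
  simpa [LinearOrderedField.smul_Icc hc] using this

lemma norm_chord_sq_mul_rpow_le {t u r : ℝ} (ht : 0 < t) (hu : |u| ≤ t * π) (hr : r ≤ 0) :
    ‖chord u ^ 2 * (t * chord (u / t)) ^ r‖ ≤ (π / 2) ^ (-r) * (chord u ^ 2 * |u| ^ r) := by
  rcases eq_or_ne u 0 with rfl | hu0
  · simp
  have hlow : 0 < 2 / π * |u| := by have := abs_pos.2 hu0; positivity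
  have hchord := chord_nonneg (u / t)
  rw [Real.norm_of_nonneg (by positivity)]
  calc chord u ^ 2 * (t * chord (u / t)) ^ r ≤ chord u ^ 2 * (2 / π * |u|) ^ r :=
        mul_le_mul_of_nonneg_left
          (Real.rpow_le_rpow_of_nonpos hlow (two_div_pi_mul_abs_le_mul_chord_div ht hu) hr)
          (sq_nonneg _)
    _ = (π / 2) ^ (-r) * (chord u ^ 2 * |u| ^ r) := by
        rw [Real.mul_rpow (by positivity) (abs_nonneg u), Real.rpow_neg (by positivity),
          ← Real.inv_rpow (by positivity), inv_div]
        ring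

lemma setIntegral_Dsq_mul_chord_rpow (n : ℕ) (s : ℝ) :
    ∫ x in Icc (-π) π, Dsq n x * chord x ^ s =
      ∫ x in Icc (-π) π, chord (n * x) ^ 2 * chord x ^ (s - 2) := by
  refine setIntegral_congr_ae measurableSet_Icc ?_
  filter_upwards [compl_mem_ae_iff.2 (measure_singleton (0 : ℝ))] with x hx0 hx
  have hpos : 0 < chord x := by
    have := abs_pos.2 hx0
    exact (by positivity : 0 < 2 / π * |x|).trans_le (two_div_pi_mul_abs_le_chord (abs_le.2 hx))
  rw [Real.rpow_sub hpos, Real.rpow_two, ← Dsq_mul_chord_sq]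
  field_simp

lemma rpow_mul_setIntegral_chord_sq_mul_rpow {t : ℝ} (ht : 0 < t) (r : ℝ) :
    t ^ (r + 1) * ∫ x in Icc (-π) π, chord (t * x) ^ 2 * chord x ^ r =
      ∫ u in Icc (-(t * π)) (t * π), chord u ^ 2 * (t * chord (u / t)) ^ r := by
  have := setIntegral_Icc_comp_mul (fun u => chord u ^ 2 * chord (u / t) ^ r) π ht
  simp only [mul_div_cancel_left₀ _ ht.ne', smul_eq_mul] at this
  rw [this, Real.rpow_add_one ht.ne', mul_assoc, ← mul_assoc t, mul_inv_cancel₀ ht.ne', one_mul,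
    ← integral_const_mul]
  congr with u
  rw [Real.mul_rpow ht.le (chord_nonneg _)]
  ring

/-- The elementary limit used in the proof of Proposition 3.1 (`farimaLM`):
`n^{-1-2d} ∫_{-π}^{π} D_n²(x) |1-e^{-ix}|^{-2d} dx → ∫_ℝ |1-e^{-ix}|² |x|^{-2-2d} dx < ∞`
for `0 < d < 1/2`. -/
theorem dirichlet_fractional_limit (d : ℝ) (hd0 : 0 < d) (hd : d < 1 / 2) :
    Tendsto (fun n : ℕ => (n : ℝ) ^ (-1 - 2 * d) *
        ∫ x in Set.Icc (-Real.pi) Real.pi,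
          Dsq n x * ‖1 - Complex.exp (-Complex.I * (x : ℂ))‖ ^ (-(2 * d)))
      atTop
      (nhds (∫ x : ℝ,
        ‖1 - Complex.exp (-Complex.I * (x : ℂ))‖ ^ 2 * |x| ^ (-2 - 2 * d)))
    ∧ Integrable (fun x : ℝ =>
        ‖1 - Complex.exp (-Complex.I * (x : ℂ))‖ ^ 2 * |x| ^ (-2 - 2 * d)) := by
  simp only [norm_one_sub_exp_neg_I_mul_eq_chord]
  have hint := integrable_chord_sq_mul_abs_rpow (r := -2 - 2 * d) (by linarith) (by linarith)
  refine ⟨?_, hint⟩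
  have hlim := tendsto_setIntegral_Icc_of_dominated
    (F := fun (n : ℕ) u => chord u ^ 2 * (n * chord (u / n)) ^ (-2 - 2 * d))
    (a := fun n : ℕ => n * π) _ (tendsto_natCast_atTop_atTop.atTop_mul_const Real.pi_pos)
    (Eventually.of_forall fun n => (by fun_prop : Measurable _).aestronglyMeasurable)
    (by
      filter_upwards [eventually_gt_atTop 0] with n hn
      exact ae_of_all _ fun u hu =>
        norm_chord_sq_mul_rpow_le (Nat.cast_pos.2 hn) (abs_le.2 hu) (by linarith))
    (hint.const_mul _)
    (by
      filter_upwards [compl_mem_ae_iff.2 (measure_singleton (0 : ℝ))] with u hu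
      exact (((tendsto_mul_chord_div_atTop u).comp tendsto_natCast_atTop_atTop).rpow_const
        (Or.inl (abs_ne_zero.2 hu))).const_mul _)
  refine hlim.congr' ?_
  filter_upwards [eventually_gt_atTop 0] with n hn
  rw [setIntegral_Dsq_mul_chord_rpow, ← rpow_mul_setIntegral_chord_sq_mul_rpow (Nat.cast_pos.2 hn)]
  ring_nf
end
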